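/- arXiv:2602.03991 — 3 statements merged into one kernel-verified Lean document; each statement's English description precedes it below -/
import Mathlib

section
/- Suppose every k⁻-path partition of G uses at least |V|/k paths, and suppose 𝒫 and 𝒬 are k⁻-path partitions of G with |E(𝒫)| ≥ α·|E(𝒬)| for some 0 ≤ α ≤ 1, where 𝒬 has the minimum number of paths. Then |𝒫| ≤ (α + (1-α)·k)·|𝒬|. -/
open SimpleGraph Finset

/-- A `k⁻`-path partition of a graph `G`: a set of vertex-disjoint paths
(each recorded as a nonempty duplicate-free list whose consecutive entries are
adjacent in `G`), each with at most `k` vertices, covering every vertex exactly once. -/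
structure KppPartition {V : Type} [Fintype V] [DecidableEq V] (G : SimpleGraph V) (k : ℕ) where
  paths : Finset (List V)
  nodup : ∀ p ∈ paths, p.Nodup
  chain : ∀ p ∈ paths, p.Chain' G.Adj
  nonempty : ∀ p ∈ paths, p ≠ []
  le_k : ∀ p ∈ paths, p.length ≤ k
  cover : ∀ v : V, ∃! p, p ∈ paths ∧ v ∈ p

/-- The number of paths in a `k⁻`-path partition. -/
def KppPartition.numPaths {V : Type} [Fintype V] [DecidableEq V] {G : SimpleGraph V} {k : ℕ}
    (P : KppPartition G k) : ℕ := P.paths.card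

/-- The total number of edges over all paths in a `k⁻`-path partition
(a path on `m` vertices has `m - 1` edges). -/
def KppPartition.numEdges {V : Type} [Fintype V] [DecidableEq V] {G : SimpleGraph V} {k : ℕ}
    (P : KppPartition G k) : ℕ := ∑ p ∈ P.paths, (p.length - 1)

lemma KppPartition.paths_sum_length {V : Type} [Fintype V] [DecidableEq V] {G : SimpleGraph V}
    {k : ℕ} (R : KppPartition G k) : ∑ p ∈ R.paths, p.length = Fintype.card V := by
  have hbU : (Finset.univ : Finset V) = R.paths.biUnion (fun p => p.toFinset) := by
    ext v
    simp only [Finset.mem_univ, Finset.mem_biUnion, List.mem_toFinset, true_iff]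
    obtain ⟨p, hp, -⟩ := R.cover v
    exact ⟨p, hp.1, hp.2⟩
  have hdisj : ∀ p ∈ R.paths, ∀ q ∈ R.paths, p ≠ q → Disjoint p.toFinset q.toFinset := by
    intro p hp q hq hpq
    rw [Finset.disjoint_left]
    intro v hvp hvq
    simp only [List.mem_toFinset] at hvp hvq
    obtain ⟨r, -, hr⟩ := R.cover v
    exact hpq ((hr p ⟨hp, hvp⟩).trans (hr q ⟨hq, hvq⟩).symm)
  calc ∑ p ∈ R.paths, p.length = ∑ p ∈ R.paths, p.toFinset.card := by
        refine Finset.sum_congr rfl fun p hp => ?_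
        rw [List.toFinset_card_of_nodup (R.nodup p hp)]
    _ = (R.paths.biUnion (fun p => p.toFinset)).card := (Finset.card_biUnion hdisj).symm
    _ = Fintype.card V := by rw [← hbU, Finset.card_univ]

lemma KppPartition.numPaths_add_numEdges {V : Type} [Fintype V] [DecidableEq V]
    {G : SimpleGraph V} {k : ℕ} (R : KppPartition G k) :
    R.numPaths + R.numEdges = Fintype.card V := by
  rw [KppPartition.numPaths, KppPartition.numEdges, ← R.paths_sum_length,
    Finset.card_eq_sum_ones, ← Finset.sum_add_distrib]
  refine Finset.sum_congr rfl fun p hp => ?_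
  have : 1 ≤ p.length := List.length_pos_iff.mpr (R.nonempty p hp)
  omega

theorem stmt_7 {V : Type} [Fintype V] [DecidableEq V] (G : SimpleGraph V) (k : ℕ)
    (hk : 1 ≤ k) (α : ℚ) (hα0 : 0 ≤ α) (hα1 : α ≤ 1)
    (hlb : ∀ R : KppPartition G k, (Fintype.card V : ℚ) / k ≤ (R.numPaths : ℚ))
    (P Q : KppPartition G k)
    (hQmin : ∀ R : KppPartition G k, Q.numPaths ≤ R.numPaths)
    (hPQ : (P.numEdges : ℚ) ≥ α * (Q.numEdges : ℚ)) :
    (P.numPaths : ℚ) ≤ (α + (1 - α) * k) * (Q.numPaths : ℚ) := by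
  have hP := P.numPaths_add_numEdges
  have hQ := Q.numPaths_add_numEdges
  have hn : (Fintype.card V : ℚ) = P.numPaths + P.numEdges := by exact_mod_cast hP.symm
  have hn' : (Fintype.card V : ℚ) = Q.numPaths + Q.numEdges := by exact_mod_cast hQ.symm
  have hk' : (0:ℚ) < k := by exact_mod_cast hk
  have hnk : (Fintype.card V : ℚ) ≤ k * Q.numPaths := by
    have := hlb Q
    rw [div_le_iff₀ hk'] at this
    linarith
  nlinarith [hPQ, hn, hn', hnk, hα0, hα1]
end

section
/- An α-approximation algorithm for the maximization problem kPPE (maximizing edges in a k⁻-path partition) yields a ((1-α)k + α)-approximation for the minimization problem kPP (minimizing the number of paths): concretely, if |E(𝒫)| ≥ α|E(𝒬)| where 𝒬 is a minimum k⁻-path partition, then |𝒫| = |V| - |E(𝒫)| ≤ α|𝒬| + (1-α)|V| ≤ ((1-α)k + α)|𝒬|. -/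
open SimpleGraph Finset

lemma kpp_sum_length {V : Type} [Fintype V] [DecidableEq V] {G : SimpleGraph V} {k : ℕ}
    (P : KppPartition G k) : ∑ p ∈ P.paths, p.length = Fintype.card V := by
  have huniv : (Finset.univ : Finset V) = P.paths.biUnion (fun p => p.toFinset) := by
    ext v
    simp only [Finset.mem_univ, Finset.mem_biUnion, List.mem_toFinset, true_iff]
    obtain ⟨p, ⟨hp, hv⟩, _⟩ := P.cover v
    exact ⟨p, hp, hv⟩
  have hdisj : ∀ p ∈ P.paths, ∀ q ∈ P.paths, p ≠ q → Disjoint p.toFinset q.toFinset := by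
    intro p hp q hq hpq
    rw [Finset.disjoint_left]
    intro v hvp hvq
    simp only [List.mem_toFinset] at hvp hvq
    obtain ⟨r, _, hr⟩ := P.cover v
    exact hpq ((hr p ⟨hp, hvp⟩).trans (hr q ⟨hq, hvq⟩).symm)
  calc ∑ p ∈ P.paths, p.length = ∑ p ∈ P.paths, p.toFinset.card := by
        refine Finset.sum_congr rfl fun p hp => ?_
        rw [List.toFinset_card_of_nodup (P.nodup p hp)]
    _ = (P.paths.biUnion (fun p => p.toFinset)).card := (Finset.card_biUnion hdisj).symm
    _ = Fintype.card V := by rw [← huniv, Finset.card_univ]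

lemma kpp_key {V : Type} [Fintype V] [DecidableEq V] {G : SimpleGraph V} {k : ℕ}
    (P : KppPartition G k) : P.numPaths + P.numEdges = Fintype.card V := by
  rw [← kpp_sum_length P]
  unfold KppPartition.numPaths KppPartition.numEdges
  rw [Finset.card_eq_sum_ones, ← Finset.sum_add_distrib]
  refine Finset.sum_congr rfl fun p hp => ?_
  have : 1 ≤ p.length := List.length_pos_iff.mpr (P.nonempty p hp)
  omega

lemma kpp_card_le {V : Type} [Fintype V] [DecidableEq V] {G : SimpleGraph V} {k : ℕ}
    (P : KppPartition G k) : Fintype.card V ≤ k * P.numPaths := by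
  rw [← kpp_sum_length P]
  calc ∑ p ∈ P.paths, p.length ≤ ∑ p ∈ P.paths, k :=
        Finset.sum_le_sum (fun p hp => P.le_k p hp)
    _ = P.paths.card * k := by rw [Finset.sum_const, smul_eq_mul]
    _ = k * P.numPaths := by rw [Nat.mul_comm]; rfl

theorem stmt_8 {V : Type} [Fintype V] [DecidableEq V] (G : SimpleGraph V) (k : ℕ)
    (hk : 1 ≤ k) (α : ℚ) (hα0 : 0 ≤ α) (hα1 : α ≤ 1)
    (P Q : KppPartition G k)
    (hQmin : ∀ R : KppPartition G k, Q.numPaths ≤ R.numPaths)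
    (hPQ : (P.numEdges : ℚ) ≥ α * (Q.numEdges : ℚ)) :
    (P.numPaths : ℚ) = (Fintype.card V : ℚ) - (P.numEdges : ℚ) ∧
      (P.numPaths : ℚ) ≤ α * (Q.numPaths : ℚ) + (1 - α) * (Fintype.card V : ℚ) ∧
      α * (Q.numPaths : ℚ) + (1 - α) * (Fintype.card V : ℚ)
        ≤ ((1 - α) * k + α) * (Q.numPaths : ℚ) := by
  have hP := kpp_key P
  have hQ := kpp_key Q
  have hQk := kpp_card_le Q
  have hPc : (P.numPaths : ℚ) + P.numEdges = Fintype.card V := by exact_mod_cast congrArg Nat.cast hP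
  have hQc : (Q.numPaths : ℚ) + Q.numEdges = Fintype.card V := by exact_mod_cast congrArg Nat.cast hQ
  have hQkc : (Fintype.card V : ℚ) ≤ k * Q.numPaths := by exact_mod_cast hQk
  refine ⟨by linarith, ?_, ?_⟩
  · nlinarith [hPQ, hα0, hα1]
  · nlinarith [hQkc, hα1, hα0]
end

section
/- If nonnegative reals Q, g, b₁, b₂ satisfy g < ((2 - 2r)/r)·(2b₁ + b₂) and P ≥ r·Q - r·(8b₁ + 10b₂ + 2g) + 8b₁ + 9b₂, where r = (9 - √11)/7, then P > r·Q + (5 - 6r)·b₂ ≥ r·Q. -/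
theorem stmt_16 (P Q g b₁ b₂ : ℝ) (hQ : 0 ≤ Q) (hg : 0 ≤ g) (hb₁ : 0 ≤ b₁) (hb₂ : 0 ≤ b₂)
    (hpos : 0 < 2 * b₁ + b₂)
    (h1 : g < (2 - 2 * ((9 - Real.sqrt 11) / 7)) / ((9 - Real.sqrt 11) / 7) * (2 * b₁ + b₂))
    (h2 : P ≥ ((9 - Real.sqrt 11) / 7) * Q
        - ((9 - Real.sqrt 11) / 7) * (8 * b₁ + 10 * b₂ + 2 * g) + 8 * b₁ + 9 * b₂) :
    P > ((9 - Real.sqrt 11) / 7) * Q + (5 - 6 * ((9 - Real.sqrt 11) / 7)) * b₂ ∧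
      ((9 - Real.sqrt 11) / 7) * Q + (5 - 6 * ((9 - Real.sqrt 11) / 7)) * b₂
        ≥ ((9 - Real.sqrt 11) / 7) * Q := by
  have hs2 : Real.sqrt 11 ^ 2 = 11 := Real.sq_sqrt (by norm_num)
  have hs3 : (3 : ℝ) < Real.sqrt 11 := by
    nlinarith [Real.sqrt_nonneg 11, hs2]
  have hs34 : Real.sqrt 11 < 3.4 := by
    nlinarith [Real.sqrt_nonneg 11, hs2]
  set s := Real.sqrt 11 with hsdef
  have hr : (0 : ℝ) < (9 - s) / 7 := by linarith
  have hne : (9 - s) / 7 ≠ 0 := ne_of_gt hr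
  have h1' : g * ((9 - s) / 7) < (2 - 2 * ((9 - s) / 7)) * (2 * b₁ + b₂) := by
    have hm := mul_lt_mul_of_pos_right h1 hr
    have key : (2 - 2 * ((9 - s) / 7)) / ((9 - s) / 7) * (2 * b₁ + b₂) * ((9 - s) / 7)
        = (2 - 2 * ((9 - s) / 7)) * (2 * b₁ + b₂) := by
      rw [div_mul_eq_mul_div, div_mul_cancel₀ _ hne]
    linarith [hm, key.le, key.ge]
  constructor
  · nlinarith [h1', h2, hs2, hb₂, hpos, hr]
  · nlinarith [hb₂, hr, hs34]
end
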